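/- Let 𝓕 be a system of local filters on λ, let ⟨δ_ξ : ξ < λ⟩ be an increasing continuous sequence of ordinals below λ with δ₀ = 0, and for p ∈ Q*_λ(𝓕) and a club C of λ put S(p,C) = {ξ ∈ C : there is (α,Z,F) ∈ p with [δ_ξ, δ_{ξ+1}) ∩ Z ∈ F⁺}. If p ≤* q in Q*_λ(𝓕) and C' ⊆ C are clubs of λ, then |S(q,C') ∖ S(p,C)| < λ. -/

import Mathlib

namespace RS889

noncomputable section

open Cardinal Set

universe u v

/-- `F` is a (proper) filter on the set `Z`, presented as the family of its members. -/
def IsFilterOn {α : Type u} (F : Set (Set α)) (Z : Set α) : Prop :=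
  (∀ A ∈ F, A ⊆ Z) ∧ Z ∈ F ∧
    (∀ A ∈ F, ∀ B, A ⊆ B → B ⊆ Z → B ∈ F) ∧
    (∀ A ∈ F, ∀ B ∈ F, A ∩ B ∈ F) ∧ ∅ ∉ F

/-- The family `F⁺` of `F`-positive subsets of `Z`. -/
def posOf {α : Type u} (F : Set (Set α)) (Z : Set α) : Set (Set α) :=
  {B | B ⊆ Z ∧ ∀ C ∈ F, (B ∩ C).Nonempty}

/-- `F` is an ultrafilter on the set `Z`. -/
def IsUltraOn {α : Type u} (F : Set (Set α)) (Z : Set α) : Prop :=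
  IsFilterOn F Z ∧ ∀ A ⊆ Z, A ∈ F ∨ Z \ A ∈ F

/-- An unultra filter: every positive set splits into two positive pieces. -/
def Unultra {α : Type u} (F : Set (Set α)) (Z : Set α) : Prop :=
  ∀ A ∈ posOf F Z, ∃ B ⊆ A, B ∈ posOf F Z ∧ A \ B ∈ posOf F Z

/-- The sum `⊕^E_{x ∈ X} Fx x` of the filters `Fx x` on the sets `Z x` over a filter `E` on `X`. -/
def filSum {α : Type u} {β : Type v} (X : Set α) (E : Set (Set α))
    (Z : α → Set β) (Fx : α → Set (Set β)) : Set (Set β) :=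
  {A | A ⊆ (⋃ x ∈ X, Z x) ∧ {x | x ∈ X ∧ Z x ∩ A ∈ Fx x} ∈ E}

/-- The sum `⊕_{ζ<ξ} F ζ` over the filter of co-bounded subsets of `ξ`. -/
def cobddSum {α : Type u} (ξ : Ordinal.{0}) (Z : Ordinal.{0} → Set α)
    (F : Ordinal.{0} → Set (Set α)) : Set (Set α) :=
  {A | A ⊆ (⋃ ζ ∈ Set.Iio ξ, Z ζ) ∧ ∃ β < ξ, ∀ ζ, β ≤ ζ → ζ < ξ → Z ζ ∩ A ∈ F ζ}

/-- A triple `(α, Z, F)`: an ordinal, a set of ordinals and a family of subsets of `Z`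
(intended to be a filter on `Z`). -/
structure LocalFilter : Type 1 where
  a : Ordinal.{0}
  Z : Set Ordinal.{0}
  F : Set (Set Ordinal.{0})

/-- A system of local filters on `lam`. -/
def IsLFS (lam : Cardinal.{0}) (S : Set LocalFilter) : Prop :=
  (∀ t ∈ S, t.Z ⊆ Set.Iio lam.ord ∧ #t.Z < Cardinal.lift.{1} lam ∧
      IsLeast t.Z t.a ∧ IsFilterOn t.F t.Z) ∧
    ∀ β < lam.ord, ∃ t ∈ S, β ≤ t.a

/-- The family `Q*_lam(S)`. -/
def Qstar (lam : Cardinal.{0}) (S : Set LocalFilter) : Set (Set LocalFilter) :=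
  {r | r ⊆ S ∧ #r = Cardinal.lift.{1} lam ∧
    ∀ ξ : Ordinal.{0}, #{t | t ∈ r ∧ t.a = ξ} < Cardinal.lift.{1} lam}

/-- The filter `fil(r)` on `lam` generated by `r`. -/
def fil (lam : Cardinal.{0}) (r : Set LocalFilter) : Set (Set Ordinal.{0}) :=
  {A | A ⊆ Set.Iio lam.ord ∧ ∃ ε < lam.ord, ∀ t ∈ r, ε ≤ t.a → A ∩ t.Z ∈ t.F}

/-- `r` is strongly disjoint. -/
def StronglyDisjoint (r : Set LocalFilter) : Prop :=
  (∀ s ∈ r, ∀ t ∈ r, s.a = t.a → s = t) ∧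
    ∀ s ∈ r, ∀ t ∈ r, s.a < t.a → s.Z ⊆ Set.Iio t.a

/-- The family `Q⁰_lam(S)` of strongly disjoint members of `Q*_lam(S)`. -/
def Qzero (lam : Cardinal.{0}) (S : Set LocalFilter) : Set (Set LocalFilter) :=
  {r | r ∈ Qstar lam S ∧ StronglyDisjoint r}

/-- `fil(H) = ⋃ { fil(r) : r ∈ H }`. -/
def filH (lam : Cardinal.{0}) (H : Set (Set LocalFilter)) : Set (Set Ordinal.{0}) :=
  {A | ∃ r ∈ H, A ∈ fil lam r}

/-- A uniform family of subsets of `lam`: every member has cardinality `lam`. -/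
def IsUniform (lam : Cardinal.{0}) (D : Set (Set Ordinal.{0})) : Prop :=
  ∀ A ∈ D, #A = Cardinal.lift.{1} lam

/-- `C` is a club (closed unbounded) subset of `lam`. -/
def IsClub (lam : Cardinal.{0}) (C : Set Ordinal.{0}) : Prop :=
  C ⊆ Set.Iio lam.ord ∧ (∀ β < lam.ord, ∃ γ ∈ C, β < γ) ∧
    ∀ δ, δ < lam.ord → δ ≠ 0 → (∀ β < δ, ∃ γ ∈ C, β < γ ∧ γ < δ) → δ ∈ C

/-- `St` is stationary in `lam`. -/
def IsStationary (lam : Cardinal.{0}) (St : Set Ordinal.{0}) : Prop :=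
  ∀ C, IsClub lam C → (St ∩ C).Nonempty

/-- `D` is a weakly reasonable (ultra)filter on `lam`. -/
def WeaklyReasonable (lam : Cardinal.{0}) (D : Set (Set Ordinal.{0})) : Prop :=
  ∀ f : Ordinal.{0} → Ordinal.{0},
    (∀ δ < lam.ord, f δ < lam.ord) →
    (∀ δ δ', δ ≤ δ' → δ' < lam.ord → f δ ≤ f δ') →
    (∀ β < lam.ord, ∃ δ < lam.ord, β ≤ f δ) →
    ∃ C, IsClub lam C ∧ (⋃ δ ∈ C, Set.Ico δ (δ + f δ)) ∉ D

/-- `e` is the increasing enumeration of `C ∪ {0}` (in order type `lam`). -/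
def IsEnum (lam : Cardinal.{0}) (C : Set Ordinal.{0}) (e : Ordinal.{0} → Ordinal.{0}) : Prop :=
  (∀ ξ η, ξ < η → η < lam.ord → e ξ < e η) ∧
    (∀ ξ < lam.ord, e ξ ∈ insert 0 C) ∧
    ∀ γ ∈ insert 0 C, ∃ ξ < lam.ord, e ξ = γ

/-- The quotient `D/C`, where `e` is the increasing enumeration of `C ∪ {0}`. -/
def quotFil (lam : Cardinal.{0}) (D : Set (Set Ordinal.{0})) (e : Ordinal.{0} → Ordinal.{0}) :
    Set (Set Ordinal.{0}) :=
  {A | A ⊆ Set.Iio lam.ord ∧ (⋃ ξ ∈ A, Set.Ico (e ξ) (e (ξ + 1))) ∈ D}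

/-- `d` is an increasing continuous sequence of ordinals below `lam` (indexed by `ξ < lam`). -/
def IncrCont (lam : Cardinal.{0}) (d : Ordinal.{0} → Ordinal.{0}) : Prop :=
  (∀ ξ < lam.ord, d ξ < lam.ord) ∧
    (∀ ξ η, ξ < η → η < lam.ord → d ξ < d η) ∧
    ∀ δ, δ < lam.ord → Order.IsSuccLimit δ → ∀ β < d δ, ∃ ξ < δ, β ≤ d ξ

/-- The full system `𝓕^ult` of local non-principal ultrafilters on `lam`. -/
def Fult (lam : Cardinal.{0}) : Set LocalFilter :=
  {t | t.a < lam.ord ∧ t.a ∈ t.Z ∧ t.Z ⊆ {o | t.a ≤ o ∧ o < lam.ord} ∧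
      t.Z.Infinite ∧ #t.Z < Cardinal.lift.{1} lam ∧ IsUltraOn t.F t.Z ∧
      ∀ x : Ordinal.{0}, ({x} : Set Ordinal.{0}) ∉ t.F}

/-- `Σ(p)`. -/
def SigmaP (lam : Cardinal.{0}) (p : Set LocalFilter) : Set LocalFilter :=
  {t | t ∈ Fult lam ∧ ∀ A ∈ t.F, ∃ s ∈ p, A ∩ s.Z ∈ s.F}

/-- A linked family `H ⊆ Q*_lam`. -/
def Linked (lam : Cardinal.{0}) (H : Set (Set LocalFilter)) : Prop :=
  H.Nonempty ∧ ∀ S : Set (Set LocalFilter), S ⊆ H → S.Finite → S.Nonempty →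
    #{α : Ordinal.{0} | ∃ t : LocalFilter, t.a = α ∧ ∀ p ∈ S, t ∈ SigmaP lam p} =
      Cardinal.lift.{1} lam

/-- A big family `H ⊆ Q*_lam`. -/
def Big (lam : Cardinal.{0}) (H : Set (Set LocalFilter)) : Prop :=
  H.Nonempty ∧ ∀ D ⊆ Fult lam, ∃ q ∈ H, q ⊆ D ∨ q ∩ D = ∅

/-- The condition `(⊕)^sum_S`. -/
def SumCond (lam : Cardinal.{0}) (S : Set LocalFilter) : Prop :=
  ∀ κ : Cardinal.{0}, ℵ₀ ≤ κ → κ < lam →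
    ∀ t : Ordinal.{0} → LocalFilter,
      (∀ ξ < κ.ord, t ξ ∈ S) →
      (∀ ξ ζ, ξ < ζ → ζ < κ.ord → (t ξ).Z ⊆ Set.Iio (t ζ).a) →
      ∃ E : Set (Set Ordinal.{0}), IsFilterOn E (Set.Iio κ.ord) ∧
        (∀ A ∈ E, #A = Cardinal.lift.{1} κ) ∧
        (LocalFilter.mk (t 0).a (⋃ ξ ∈ Set.Iio κ.ord, (t ξ).Z)
          (filSum (Set.Iio κ.ord) E (fun ξ => (t ξ).Z) (fun ξ => (t ξ).F))) ∈ S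

/-- `(<lam⁺)`-completeness of a subfamily `Q` of `Q*` with respect to `≤*`. -/
def Complete (lam : Cardinal.{0}) (Q : Set (Set LocalFilter)) : Prop :=
  ∀ γ : Ordinal.{0}, γ.card ≤ lam →
    ∀ p : Ordinal.{0} → Set LocalFilter,
      (∀ ξ < γ, p ξ ∈ Q) →
      (∀ ξ ζ, ξ ≤ ζ → ζ < γ → fil lam (p ξ) ⊆ fil lam (p ζ)) →
      ∃ q ∈ Q, ∀ ξ < γ, fil lam (p ξ) ⊆ fil lam q

/-- The full system `𝓕₀` of co-bounded filters on `lam`. -/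
def Fcobdd (lam : Cardinal.{0}) : Set LocalFilter :=
  {t | t.a ∈ t.Z ∧ t.Z ⊆ {o | t.a ≤ o ∧ o < lam.ord} ∧
      #t.Z < Cardinal.lift.{1} lam ∧ sSup t.Z ∉ t.Z ∧
      t.F = {A | A ⊆ t.Z ∧ ∃ β < sSup t.Z, ∀ x ∈ t.Z, β ≤ x → x ∈ A}}

/-- The `Ē`-closure of a system `S` of local filters (as an inductive family:
it is closed under `E κ`-sums of `κ`-sequences of previously obtained triples). -/
inductive EClos (lam : Cardinal.{0}) (E : Cardinal.{0} → Set (Set Ordinal.{0}))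
    (S : Set LocalFilter) : LocalFilter → Prop
  | base : ∀ t ∈ S, EClos lam E S t
  | sum : ∀ κ : Cardinal.{0}, ℵ₀ ≤ κ → κ < lam →
      ∀ t : Ordinal.{0} → LocalFilter,
        (∀ ξ < κ.ord, EClos lam E S (t ξ)) →
        (∀ ξ ζ, ξ < ζ → ζ < κ.ord → (t ξ).Z ⊆ Set.Iio (t ζ).a) →
        EClos lam E S (LocalFilter.mk (t 0).a (⋃ ξ ∈ Set.Iio κ.ord, (t ξ).Z)
          (filSum (Set.Iio κ.ord) (E κ) (fun ξ => (t ξ).Z) (fun ξ => (t ξ).F)))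

/-- The full system `𝓕^unu` of local unultra filters on `lam`. -/
def Funu (lam : Cardinal.{0}) : Set LocalFilter :=
  {t | t.Z.Nonempty ∧ t.Z ⊆ Set.Iio lam.ord ∧ #t.Z < Cardinal.lift.{1} lam ∧
      IsLeast t.Z t.a ∧ IsFilterOn t.F t.Z ∧ Unultra t.F t.Z}

/-- A pararegularity system for `F` (on `Z`), indexed by finite subsets of `κ`. -/
def PRSystem (κ : Cardinal.{0}) (F : Set (Set Ordinal.{0})) (Z : Set Ordinal.{0}) : Prop :=
  ∃ A : Finset Ordinal.{0} → Set Ordinal.{0},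
    (∀ u : Finset Ordinal.{0}, ↑u ⊆ Set.Iio κ.ord → A u ∈ F) ∧
    (∀ u v : Finset Ordinal.{0}, ↑v ⊆ Set.Iio κ.ord → u ⊆ v → A v ⊆ A u) ∧
    (∀ U : Set Ordinal.{0}, U ⊆ Set.Iio κ.ord → U.Infinite →
      (⋂ ξ ∈ U, A {ξ}) = ∅) ∧
    F = {B | B ⊆ Z ∧ ∃ u : Finset Ordinal.{0}, ↑u ⊆ Set.Iio κ.ord ∧ A u ⊆ B}

/-- `F` is a pararegular filter on `Z` (with `α = min Z`). -/
def Pararegular (lam : Cardinal.{0}) (F : Set (Set Ordinal.{0})) (Z : Set Ordinal.{0})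
    (α : Ordinal.{0}) : Prop :=
  ∃ κ : Cardinal.{0}, (Ordinal.omega0 + α).card ≤ κ ∧ κ < lam ∧ PRSystem κ F Z

/-- `F` is a strongly pararegular filter on `Z` (with `α = min Z`). -/
def StronglyPararegular (lam : Cardinal.{0}) (F : Set (Set Ordinal.{0})) (Z : Set Ordinal.{0})
    (α : Ordinal.{0}) : Prop :=
  ∃ κ : Cardinal.{0}, 2 ^ (Ordinal.omega0 + α).card ≤ κ ∧ κ < lam ∧ PRSystem κ F Z

/-- The full system `𝓕^pr` of local pararegular filters on `lam`. -/
def Fpr (lam : Cardinal.{0}) : Set LocalFilter :=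
  {t | t.Z.Infinite ∧ t.Z ⊆ Set.Iio lam.ord ∧ #t.Z < Cardinal.lift.{1} lam ∧
      IsLeast t.Z t.a ∧ IsFilterOn t.F t.Z ∧ Pararegular lam t.F t.Z t.a}

/-- The full system `𝓕^spr` of local strongly pararegular filters on `lam`. -/
def Fspr (lam : Cardinal.{0}) : Set LocalFilter :=
  {t | t.Z.Infinite ∧ t.Z ⊆ Set.Iio lam.ord ∧ #t.Z < Cardinal.lift.{1} lam ∧
      IsLeast t.Z t.a ∧ IsFilterOn t.F t.Z ∧ StronglyPararegular lam t.F t.Z t.a}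

/-- The space `^lam lam`. -/
def Fn (lam : Cardinal.{0}) : Type 1 := ↥(Set.Iio lam.ord) → ↥(Set.Iio lam.ord)

/-- The basic open set `O_s` determined by a partial function `s` of length `γ`. -/
def basicOpen (lam : Cardinal.{0}) (γ : Ordinal.{0}) (s : Ordinal.{0} → Ordinal.{0}) : Set (Fn lam) :=
  {f | ∀ ξ : ↥(Set.Iio lam.ord), (ξ : Ordinal.{0}) < γ → ((f ξ : Ordinal.{0}) = s ξ)}

/-- `X ⊆ ^lam lam` is nowhere dense. -/
def NwDense (lam : Cardinal.{0}) (X : Set (Fn lam)) : Prop :=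
  ∀ γ < lam.ord, ∀ s : Ordinal.{0} → Ordinal.{0}, (∀ ξ < γ, s ξ < lam.ord) →
    ∃ γ', γ ≤ γ' ∧ γ' < lam.ord ∧ ∃ s' : Ordinal.{0} → Ordinal.{0},
      (∀ ξ < γ', s' ξ < lam.ord) ∧ (∀ ξ < γ, s' ξ = s ξ) ∧
      basicOpen lam γ' s' ∩ X = ∅

/-- `X` belongs to the ideal `M^lam_{lam,lam}`: it is covered by `lam` many
nowhere dense sets. -/
def MeagerSet (lam : Cardinal.{0}) (X : Set (Fn lam)) : Prop :=
  ∃ A : Ordinal.{0} → Set (Fn lam), (∀ ξ < lam.ord, NwDense lam (A ξ)) ∧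
    X ⊆ ⋃ ξ ∈ Set.Iio lam.ord, A ξ

/-- `cov(M^lam_{lam,lam})`. -/
def covM (lam : Cardinal.{0}) : Cardinal.{1} :=
  sInf {c | ∃ 𝓐 : Set (Set (Fn lam)), (∀ X ∈ 𝓐, MeagerSet lam X) ∧
    ⋃₀ 𝓐 = Set.univ ∧ #𝓐 = c}

/-- Nodes of trees of sequences of ordinals: a pair (level, function). -/
abbrev TNode : Type 1 := Ordinal.{0} × (Ordinal.{0} → Ordinal.{0})

/-- Truncation of a function below `γ` (with value `0` elsewhere). -/
def truncF (γ : Ordinal.{0}) (f : Ordinal.{0} → Ordinal.{0}) : Ordinal.{0} → Ordinal.{0} :=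
  fun ξ => if ξ < γ then f ξ else 0

/-- `T` is a tree of height `lam` of (normalized) sequences of ordinals `< lam`. -/
def IsTree (lam : Cardinal.{0}) (T : Set TNode) : Prop :=
  (∀ x ∈ T, x.1 < lam.ord ∧ (∀ ξ < x.1, x.2 ξ < lam.ord) ∧ x.2 = truncF x.1 x.2) ∧
    ∀ x ∈ T, ∀ γ ≤ x.1, (γ, truncF γ x.2) ∈ T

/-- The `γ`-th level of `T`. -/
def treeLevel (T : Set TNode) (γ : Ordinal.{0}) : Set TNode := {x | x ∈ T ∧ x.1 = γ}

/-- `T` is a `lam`-Kurepa tree: a tree of height `lam` all of whose levels are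
nonempty of cardinality `< lam`. -/
def IsKurepaTree (lam : Cardinal.{0}) (T : Set TNode) : Prop :=
  IsTree lam T ∧
    ∀ γ < lam.ord, (treeLevel T γ).Nonempty ∧
      #(treeLevel T γ) < Cardinal.lift.{1} lam

/-- The set of `lam`-branches of `T` (normalized functions all of whose proper
initial segments lie in `T`). -/
def branches (lam : Cardinal.{0}) (T : Set TNode) : Set (Ordinal.{0} → Ordinal.{0}) :=
  {f | f = truncF lam.ord f ∧ ∀ γ < lam.ord, (γ, truncF γ f) ∈ T}


/-!
Suppose `S(q, C') ∖ S(p, C)` has size `λ`. Fewer than `λ` triples of `q` start below a given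
`β < λ`, and each of them meets fewer than `λ` of the disjoint blocks `[δ_ξ, δ_{ξ+1})`; so for
every `e < λ` there are `ξ_e ∈ S(q, C') ∖ S(p, C)` and `t_e ∈ q` starting at or above `e` for
which `Y_e = [δ_{ξ_e}, δ_{ξ_e+1}) ∩ Z_{t_e}` is `t_e`-positive. Let `E` be the set of closure
points of a function bounding all the `Z_s`, `s ∈ p`, and all the `Y_e`. For `s ∈ p`, the set
`Z_s` misses every `Y_e` with `e ∈ E` except the one for the largest `e ∈ E` below `α_s`, and that
one is null for the filter of `s` since `ξ_e ∉ S(p, C)`. Hence `A = λ ∖ ⋃_{e ∈ E} Y_e` lies in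
`fil(p) ⊆ fil(q)`, which contradicts the positivity of `Y_e` for large `e ∈ E`.
-/

def block (d : Ordinal.{0} → Ordinal.{0}) (ξ : Ordinal.{0}) : Set Ordinal.{0} :=
  Set.Ico (d ξ) (d (ξ + 1))

/-- The set `S(p, C)`. -/
def posBlocks (d : Ordinal.{0} → Ordinal.{0}) (p : Set LocalFilter) (C : Set Ordinal.{0}) :
    Set Ordinal.{0} :=
  {ξ | ξ ∈ C ∧ ∃ t ∈ p, block d ξ ∩ t.Z ∈ posOf t.F t.Z}

def closurePoints (f : Ordinal.{0} → Ordinal.{0}) : Set Ordinal.{0} :=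
  {e | ∀ ζ < e, f ζ < e}

section

variable {lam : Cardinal.{0}}

lemma posOf_nonempty {α : Type u} {F : Set (Set α)} {Z B : Set α} (hF : IsFilterOn F Z)
    (hB : B ∈ posOf F Z) : B.Nonempty :=
  (hB.2 Z hF.2.1).mono inter_subset_left

lemma exists_disjoint_of_inter_notMem_posOf {α : Type u} {F : Set (Set α)} {Z B : Set α}
    (hF : IsFilterOn F Z) (hB : B ∩ Z ∉ posOf F Z) : ∃ D ∈ F, Disjoint D B := by
  by_contra! h
  refine hB ⟨inter_subset_right, fun D hD => ?_⟩
  obtain ⟨x, hxD, hxB⟩ := not_disjoint_iff.1 (h D hD)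
  exact ⟨x, ⟨hxB, hF.1 D hD hxD⟩, hxD⟩

lemma IncrCont.monotoneOn {d : Ordinal.{0} → Ordinal.{0}} (hd : IncrCont lam d) :
    MonotoneOn d (Iio lam.ord) := by
  intro ξ _ η hη hle
  rcases hle.lt_or_eq with hlt | rfl
  exacts [(hd.2.1 ξ η hlt hη).le, le_rfl]

lemma IsLFS.a_lt {F : Set LocalFilter} (hF : IsLFS lam F) {t : LocalFilter} (ht : t ∈ F) :
    t.a < lam.ord :=
  (hF.1 t ht).1 (hF.1 t ht).2.2.1.1

lemma IsLFS.a_le {F : Set LocalFilter} (hF : IsLFS lam F) {t : LocalFilter} (ht : t ∈ F)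
    {x : Ordinal.{0}} (hx : x ∈ t.Z) : t.a ≤ x :=
  (hF.1 t ht).2.2.1.2 hx

lemma pairwiseDisjoint_block {o : Ordinal.{0}} {d : Ordinal.{0} → Ordinal.{0}}
    (hd : MonotoneOn d (Iio o)) : (Iio o).PairwiseDisjoint (block d) := by
  have key : ∀ ξ η, ξ < η → η < o → Disjoint (block d ξ) (block d η) := fun ξ η hlt hη =>
    have hsucc := Order.add_one_le_of_lt hlt
    disjoint_left.2 fun _ hx hx' => (hx.2.trans_le (hd (hsucc.trans_lt hη) hη hsucc)).not_ge hx'.1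
  intro ξ hξ η hη hne
  exact hne.lt_or_gt.elim (fun h => key ξ η h hη) fun h => (key η ξ h hξ).symm

lemma mk_setOf_block_inter_nonempty_le {o : Ordinal.{0}} {d : Ordinal.{0} → Ordinal.{0}}
    (hd : MonotoneOn d (Iio o)) (Z : Set Ordinal.{0}) :
    #{ξ | ξ < o ∧ (block d ξ ∩ Z).Nonempty} ≤ #Z := by
  choose g hg using fun ξ : {ξ | ξ < o ∧ (block d ξ ∩ Z).Nonempty} => ξ.2.2
  refine mk_le_of_injective (f := fun ξ => (⟨g ξ, (hg ξ).2⟩ : Z)) fun ξ η hξη => Subtype.ext ?_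
  have hgξη : g ξ = g η := congrArg Subtype.val hξη
  exact (pairwiseDisjoint_block hd).elim_set ξ.2.1 η.2.1 (g ξ) (hg ξ).1 (hgξη ▸ (hg η).1)

lemma exists_lt_ord_subset_Iio (hreg : lam.IsRegular) {X : Set Ordinal.{0}}
    (hX : X ⊆ Iio lam.ord) (hc : #X < Cardinal.lift.{1} lam) : ∃ γ < lam.ord, X ⊆ Iio γ := by
  refine ⟨sSup X + 1, (isSuccLimit_ord hreg.aleph0_le).add_one_lt ?_,
    fun x hx => Order.lt_add_one_iff.2 (le_csSup ⟨_, fun y hy => (hX hy).le⟩ hx)⟩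
  exact Ordinal.sSup_lt_of_lt_cof (by rwa [← Ordinal.lift_cof, hreg.cof_ord]) hX

lemma mk_setOf_a_lt_lt (hreg : lam.IsRegular) {r : Set LocalFilter}
    (hr : ∀ ξ : Ordinal.{0}, #{t | t ∈ r ∧ t.a = ξ} < Cardinal.lift.{1} lam)
    {β : Ordinal.{0}} (hβ : β < lam.ord) :
    #{t | t ∈ r ∧ t.a < β} < Cardinal.lift.{1} lam := by
  have hsub : {t | t ∈ r ∧ t.a < β} ⊆ ⋃ ξ ∈ Iio β, {t | t ∈ r ∧ t.a = ξ} :=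
    fun t ht => mem_biUnion ht.2 ⟨ht.1, rfl⟩
  refine (mk_le_mk_of_subset hsub).trans_lt ?_
  refine (card_biUnion_lt_iff_forall_of_isRegular hreg.lift ?_).2 fun ξ _ => hr ξ
  rw [mk_Iio_ordinal, lift_lt]
  exact lt_ord.1 hβ

lemma exists_subset_Iio_of_mem_Qstar (hreg : lam.IsRegular) {F r : Set LocalFilter}
    (hF : IsLFS lam F) (hr : r ∈ Qstar lam F) {ζ : Ordinal.{0}} (hζ : ζ < lam.ord) :
    ∃ γ < lam.ord, ∀ s ∈ r, s.a ≤ ζ → s.Z ⊆ Iio γ := by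
  have hζ1 : ζ + 1 < lam.ord := (isSuccLimit_ord hreg.aleph0_le).add_one_lt hζ
  obtain ⟨γ, hγ, hX⟩ := exists_lt_ord_subset_Iio hreg
    (X := ⋃ s ∈ {s | s ∈ r ∧ s.a < ζ + 1}, s.Z)
    (iUnion₂_subset fun s hs => (hF.1 s (hr.1 hs.1)).1)
    ((card_biUnion_lt_iff_forall_of_isRegular hreg.lift (mk_setOf_a_lt_lt hreg hr.2.2 hζ1)).2
      fun s hs => (hF.1 s (hr.1 hs.1)).2.1)
  refine ⟨γ, hγ, fun s hs hsζ => Subset.trans ?_ hX⟩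
  exact subset_biUnion_of_mem (u := LocalFilter.Z)
    (show s ∈ {s | s ∈ r ∧ s.a < ζ + 1} from ⟨hs, Order.lt_add_one_iff.2 hsζ⟩)

lemma sSup_mem_closurePoints {f : Ordinal.{0} → Ordinal.{0}} {X : Set Ordinal.{0}}
    (hX : X ⊆ closurePoints f) (hbdd : BddAbove X) : sSup X ∈ closurePoints f := by
  intro ζ hζ
  obtain ⟨e, he, hζe⟩ := exists_lt_of_lt_csSup' hζ
  exact (hX he ζ hζe).trans_le (le_csSup hbdd he)

lemma exists_mem_closurePoints_gt (hreg : lam.IsRegular) (hunc : ℵ₀ < lam)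
    {f : Ordinal.{0} → Ordinal.{0}} (hf : ∀ ζ < lam.ord, f ζ < lam.ord)
    {β : Ordinal.{0}} (hβ : β < lam.ord) : ∃ e ∈ closurePoints f, β < e ∧ e < lam.ord := by
  have hstep : ∀ η < lam.ord, ∃ γ < lam.ord, insert η (f '' Iio η) ⊆ Iio γ := by
    intro η hη
    refine exists_lt_ord_subset_Iio hreg (insert_subset hη ?_) ?_
    · rintro _ ⟨ζ, hζ, rfl⟩
      exact hf ζ (hζ.trans hη)
    · refine (mk_insert_le.trans_lt (add_lt_of_lt hreg.lift.aleph0_le ?_ ?_))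
      · exact mk_image_le.trans_lt (by rw [mk_Iio_ordinal, lift_lt]; exact lt_ord.1 hη)
      · exact one_lt_aleph0.trans_le hreg.lift.aleph0_le
  choose! h hhlt hh using hstep
  have he : Ordinal.nfp h β < lam.ord := nfp_lt_ord_of_isRegular hreg hunc.ne' hhlt hβ
  refine ⟨Ordinal.nfp h β, fun ζ hζ => ?_, ?_, he⟩
  · obtain ⟨n, hn⟩ := Ordinal.lt_nfp_iff.1 hζ
    have hlt := (Ordinal.iterate_le_nfp h β n).trans_lt he
    refine (hh _ hlt (mem_insert_of_mem _ (mem_image_of_mem f hn))).trans_le ?_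
    simpa only [Function.iterate_succ_apply'] using Ordinal.iterate_le_nfp h β (n + 1)
  · exact (hh β hβ (mem_insert β _)).trans_le (Ordinal.iterate_le_nfp h β 1)

lemma exists_disjoint_block_of_notMem_posBlocks {F p : Set LocalFilter} (hF : IsLFS lam F)
    (hp : p ⊆ F) {d : Ordinal.{0} → Ordinal.{0}} {C : Set Ordinal.{0}} {ξ : Ordinal.{0}}
    (hξC : ξ ∈ C) (hξ : ξ ∉ posBlocks d p C) {s : LocalFilter} (hs : s ∈ p) :
    ∃ D ∈ s.F, Disjoint D (block d ξ) :=
  exists_disjoint_of_inter_notMem_posOf (hF.1 s (hp hs)).2.2.2 fun hpos => hξ ⟨hξC, s, hs, hpos⟩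

lemma exists_posBlock_witness (hreg : lam.IsRegular) {F q : Set LocalFilter}
    (hF : IsLFS lam F) (hq : q ∈ Qstar lam F) {d : Ordinal.{0} → Ordinal.{0}}
    (hd : MonotoneOn d (Iio lam.ord)) {C B : Set Ordinal.{0}} (hB : B ⊆ posBlocks d q C)
    (hBlt : B ⊆ Iio lam.ord) (hcard : Cardinal.lift.{1} lam ≤ #B)
    {β : Ordinal.{0}} (hβ : β < lam.ord) :
    ∃ ξ ∈ B, ∃ t ∈ q, β ≤ t.a ∧ block d ξ ∩ t.Z ∈ posOf t.F t.Z := by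
  by_contra! h
  have hcover : B ⊆ ⋃ t ∈ {t | t ∈ q ∧ t.a < β},
      {ξ | ξ < lam.ord ∧ (block d ξ ∩ t.Z).Nonempty} := by
    intro ξ hξ
    obtain ⟨-, t, htq, htpos⟩ := hB hξ
    refine mem_biUnion ⟨htq, not_le.1 fun hβt => h ξ hξ t htq hβt htpos⟩ ⟨hBlt hξ, ?_⟩
    exact posOf_nonempty (hF.1 t (hq.1 htq)).2.2.2 htpos
  refine (hcard.trans (mk_le_mk_of_subset hcover)).not_gt ?_
  refine (card_biUnion_lt_iff_forall_of_isRegular hreg.lift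
    (mk_setOf_a_lt_lt hreg hq.2.2 hβ)).2 fun t ht => ?_
  exact (mk_setOf_block_inter_nonempty_le hd t.Z).trans_lt (hF.1 t (hq.1 ht.1)).2.1

lemma compl_iUnion_mem_fil (hlam : 0 < lam.ord) {F p : Set LocalFilter} (hF : IsLFS lam F)
    (hp : p ⊆ F) {f : Ordinal.{0} → Ordinal.{0}} (hfp : ∀ s ∈ p, s.Z ⊆ Iio (f s.a))
    {Y : Ordinal.{0} → Set Ordinal.{0}}
    (hY : ∀ e ∈ closurePoints f, e < lam.ord → Y e ⊆ Ico e (f e))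
    (hnull : ∀ s ∈ p, ∀ e ∈ closurePoints f, e < lam.ord → ∃ D ∈ s.F, Disjoint D (Y e)) :
    Iio lam.ord \ ⋃ e ∈ closurePoints f ∩ Iio lam.ord, Y e ∈ fil lam p := by
  refine ⟨sdiff_subset, 0, hlam, fun s hs _ => ?_⟩
  obtain ⟨hZlt, -, hamin, hsF⟩ := hF.1 s (hp hs)
  -- the only `Y e` that `s.Z` can meet is the one for the largest closure point below `s.a`
  set X := closurePoints f ∩ Iic s.a
  have hbdd : BddAbove X := ⟨s.a, fun e he => he.2⟩
  have heX : sSup X ∈ closurePoints f := sSup_mem_closurePoints inter_subset_left hbdd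
  have hea : sSup X ≤ s.a := csSup_le' fun e he => he.2
  obtain ⟨D, hD, hDY⟩ := hnull s hs _ heX (hea.trans_lt (hZlt hamin.1))
  have hDZ : D ⊆ s.Z := hsF.1 D hD
  refine hsF.2.2.1 D hD _ (fun x hx => ⟨⟨hZlt (hDZ hx), ?_⟩, hDZ hx⟩) inter_subset_right
  simp only [mem_iUnion₂, not_exists]
  intro e ⟨he, helt⟩ hxY
  have hax : s.a ≤ x := hamin.2 (hDZ hx)
  rcases lt_trichotomy e (sSup X) with hlt | rfl | hgt
  · exact ((hY e he helt hxY).2.trans_le (heX e hlt |>.le.trans (hea.trans hax))).false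
  · exact disjoint_left.1 hDY hx hxY
  · have hae : s.a < e := not_le.1 fun hle => hgt.not_ge (le_csSup hbdd ⟨he, hle⟩)
    exact ((hfp s hs (hDZ hx)).trans_le ((he _ hae).le.trans (hY e he helt hxY).1)).false

end

theorem stmt9_general (lam : Cardinal.{0}) (hreg : lam.IsRegular) (hunc : ℵ₀ < lam)
    (F : Set LocalFilter) (hF : IsLFS lam F)
    (d : Ordinal.{0} → Ordinal.{0}) (hd : IncrCont lam d)
    (p q : Set LocalFilter) (hp : p ∈ Qstar lam F) (hq : q ∈ Qstar lam F)
    (hpq : fil lam p ⊆ fil lam q)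
    (C C' : Set Ordinal.{0}) (hC' : IsClub lam C')
    (hsub : C' ⊆ C) :
    #(↥({ξ | ξ ∈ C' ∧ ∃ t ∈ q, Set.Ico (d ξ) (d (ξ + 1)) ∩ t.Z ∈ posOf t.F t.Z} \
       {ξ | ξ ∈ C ∧ ∃ t ∈ p, Set.Ico (d ξ) (d (ξ + 1)) ∩ t.Z ∈ posOf t.F t.Z}))
      < Cardinal.lift.{1} lam := by
  change #(posBlocks d q C' \ posBlocks d p C : Set Ordinal.{0}) < _
  by_contra! hcard
  have : Nonempty LocalFilter := ⟨⟨0, ∅, ∅⟩⟩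
  choose! ξ hξ t htq hta hpos using fun β (hβ : β < lam.ord) =>
    exists_posBlock_witness hreg hF hq hd.monotoneOn (fun _ h => h.1) (fun _ h => hC'.1 h.1.1)
      hcard hβ
  have hbound : ∀ ζ < lam.ord, ∃ γ < lam.ord,
      (∀ s ∈ p, s.a ≤ ζ → s.Z ⊆ Iio γ) ∧ (t ζ).Z ⊆ Iio γ := by
    intro ζ hζ
    obtain ⟨γ₁, hγ₁, hp₁⟩ := exists_subset_Iio_of_mem_Qstar hreg hF hp hζ
    obtain ⟨htZ, htcard, -⟩ := hF.1 _ (hq.1 (htq ζ hζ))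
    obtain ⟨γ₂, hγ₂, ht₂⟩ := exists_lt_ord_subset_Iio hreg htZ htcard
    exact ⟨max γ₁ γ₂, max_lt hγ₁ hγ₂,
      fun s hs hsζ => (hp₁ s hs hsζ).trans (Iio_subset_Iio (le_max_left _ _)),
      ht₂.trans (Iio_subset_Iio (le_max_right _ _))⟩
  choose! f hflt hfp hft using hbound
  set Y := fun e => block d (ξ e) ∩ (t e).Z
  have hY : ∀ e ∈ closurePoints f, e < lam.ord → Y e ⊆ Ico e (f e) := fun e _ he x hx =>
    ⟨(hta e he).trans (hF.a_le (hq.1 (htq e he)) hx.2), hft e he hx.2⟩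
  have hnull : ∀ s ∈ p, ∀ e ∈ closurePoints f, e < lam.ord → ∃ D ∈ s.F, Disjoint D (Y e) := by
    intro s hs e _ he
    obtain ⟨D, hD, hDξ⟩ :=
      exists_disjoint_block_of_notMem_posBlocks hF hp.1 (hsub (hξ e he).1.1) (hξ e he).2 hs
    exact ⟨D, hD, hDξ.mono_right inter_subset_left⟩
  have hA := compl_iUnion_mem_fil hreg.ord_pos hF hp.1
    (fun s hs => hfp s.a (hF.a_lt (hp.1 hs)) s hs le_rfl) hY hnull
  obtain ⟨-, ε, hε, hAq⟩ := hpq hA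
  obtain ⟨e, he, hεe, helt⟩ := exists_mem_closurePoints_gt hreg hunc hflt hε
  obtain ⟨x, hxY, hxA⟩ := (hpos e helt).2 _ (hAq _ (htq e helt) (hεe.le.trans (hta e helt)))
  exact hxA.1.2 (mem_biUnion ⟨he, helt⟩ hxY)

/-- Claim 1.10.2(1). -/
theorem stmt9 (lam : Cardinal.{0}) (hreg : lam.IsRegular) (hunc : ℵ₀ < lam)
    (F : Set LocalFilter) (hF : IsLFS lam F)
    (d : Ordinal.{0} → Ordinal.{0}) (hd : IncrCont lam d) (hd0 : d 0 = 0)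
    (p q : Set LocalFilter) (hp : p ∈ Qstar lam F) (hq : q ∈ Qstar lam F)
    (hpq : fil lam p ⊆ fil lam q)
    (C C' : Set Ordinal.{0}) (hC : IsClub lam C) (hC' : IsClub lam C')
    (hsub : C' ⊆ C) :
    #(↥({ξ | ξ ∈ C' ∧ ∃ t ∈ q, Set.Ico (d ξ) (d (ξ + 1)) ∩ t.Z ∈ posOf t.F t.Z} \
       {ξ | ξ ∈ C ∧ ∃ t ∈ p, Set.Ico (d ξ) (d (ξ + 1)) ∩ t.Z ∈ posOf t.F t.Z}))
      < Cardinal.lift.{1} lam :=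
  stmt9_general lam hreg hunc F hF d hd p q hp hq hpq C C' hC' hsub

end

end RS889
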